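/- Let μ ∈ ℍ be nonzero and let f₁, f₂, f₃, f₄ ∈ ℍ. If h^μ·f₁ + h^{μi}·f₂ + h^{μj}·f₃ + h^{μk}·f₄ = 0 for every h ∈ ℍ, then f₁ = f₂ = f₃ = f₄ = 0. -/

import Mathlib

open Quaternion Filter Topology Asymptotics

noncomputable section

/-- The imaginary unit `i` of the real quaternions. -/
def qI : ℍ[ℝ] := ⟨0, 1, 0, 0⟩
/-- The imaginary unit `j` of the real quaternions. -/
def qJ : ℍ[ℝ] := ⟨0, 0, 1, 0⟩
/-- The imaginary unit `k` of the real quaternions. -/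
def qK : ℍ[ℝ] := ⟨0, 0, 0, 1⟩

/-- Quaternion rotation `p ↦ μ p μ⁻¹`. -/
def qRot (μ p : ℍ[ℝ]) : ℍ[ℝ] := μ * p * μ⁻¹

/-- The left GHR derivative `∂f/∂q^μ` at `q`. -/
def lD (f : ℍ[ℝ] → ℍ[ℝ]) (μ q : ℍ[ℝ]) : ℍ[ℝ] :=
  (4 : ℍ[ℝ])⁻¹ * (fderiv ℝ f q 1 - fderiv ℝ f q qI * qRot μ qI
    - fderiv ℝ f q qJ * qRot μ qJ - fderiv ℝ f q qK * qRot μ qK)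

/-- The left conjugate GHR derivative `∂f/∂q^{μ*}` at `q`. -/
def lDc (f : ℍ[ℝ] → ℍ[ℝ]) (μ q : ℍ[ℝ]) : ℍ[ℝ] :=
  (4 : ℍ[ℝ])⁻¹ * (fderiv ℝ f q 1 + fderiv ℝ f q qI * qRot μ qI
    + fderiv ℝ f q qJ * qRot μ qJ + fderiv ℝ f q qK * qRot μ qK)

/-- The right GHR derivative `∂ᵣf/∂q^μ` at `q`. -/
def rD (f : ℍ[ℝ] → ℍ[ℝ]) (μ q : ℍ[ℝ]) : ℍ[ℝ] :=
  (4 : ℍ[ℝ])⁻¹ * (fderiv ℝ f q 1 - qRot μ qI * fderiv ℝ f q qI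
    - qRot μ qJ * fderiv ℝ f q qJ - qRot μ qK * fderiv ℝ f q qK)

/-- The right conjugate GHR derivative `∂ᵣf/∂q^{μ*}` at `q`. -/
def rDc (f : ℍ[ℝ] → ℍ[ℝ]) (μ q : ℍ[ℝ]) : ℍ[ℝ] :=
  (4 : ℍ[ℝ])⁻¹ * (fderiv ℝ f q 1 + qRot μ qI * fderiv ℝ f q qI
    + qRot μ qJ * fderiv ℝ f q qJ + qRot μ qK * fderiv ℝ f q qK)

/-!
Since `(μν)⁻¹ = ν⁻¹μ⁻¹`, each term is `μ (ν p ν⁻¹) (μ⁻¹ fₙ)`, so cancelling `μ` leaves the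
case `μ = 1` with unknowns `μ⁻¹ fₙ`. Conjugation by one of `i, j, k` fixes that unit and negates the
other two, so evaluating at `p = 1, i, j, k` gives a `4 × 4` Hadamard system, whose only solution
is zero.
-/

@[simp] lemma qI_re : qI.re = 0 := rfl
@[simp] lemma qI_imI : qI.imI = 1 := rfl
@[simp] lemma qI_imJ : qI.imJ = 0 := rfl
@[simp] lemma qI_imK : qI.imK = 0 := rfl
@[simp] lemma qJ_re : qJ.re = 0 := rfl
@[simp] lemma qJ_imI : qJ.imI = 0 := rfl
@[simp] lemma qJ_imJ : qJ.imJ = 1 := rfl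
@[simp] lemma qJ_imK : qJ.imK = 0 := rfl
@[simp] lemma qK_re : qK.re = 0 := rfl
@[simp] lemma qK_imI : qK.imI = 0 := rfl
@[simp] lemma qK_imJ : qK.imJ = 0 := rfl
@[simp] lemma qK_imK : qK.imK = 1 := rfl

lemma qI_ne_zero : qI ≠ 0 := fun h => by simpa [h] using qI_imI
lemma qJ_ne_zero : qJ ≠ 0 := fun h => by simpa [h] using qJ_imJ
lemma qK_ne_zero : qK ≠ 0 := fun h => by simpa [h] using qK_imK

lemma qI_mul_qJ : qI * qJ = -(qJ * qI) := by ext <;> simp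
lemma qI_mul_qK : qI * qK = -(qK * qI) := by ext <;> simp
lemma qJ_mul_qK : qJ * qK = -(qK * qJ) := by ext <;> simp
lemma qJ_mul_qI : qJ * qI = -(qI * qJ) := by ext <;> simp
lemma qK_mul_qI : qK * qI = -(qI * qK) := by ext <;> simp
lemma qK_mul_qJ : qK * qJ = -(qJ * qK) := by ext <;> simp

lemma qRot_of_commute {ν p : ℍ[ℝ]} (hν : ν ≠ 0) (h : ν * p = p * ν) : qRot ν p = p := by
  rw [qRot, h, mul_inv_cancel_right₀ hν]

lemma qRot_of_anticommute {ν p : ℍ[ℝ]} (hν : ν ≠ 0) (h : ν * p = -(p * ν)) :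
    qRot ν p = -p := by
  rw [qRot, h, neg_mul, mul_inv_cancel_right₀ hν]

lemma qRot_one {ν : ℍ[ℝ]} (hν : ν ≠ 0) : qRot ν 1 = 1 :=
  qRot_of_commute hν (by rw [mul_one, one_mul])

lemma qRot_self {ν : ℍ[ℝ]} (hν : ν ≠ 0) : qRot ν ν = ν :=
  qRot_of_commute hν rfl

theorem eq_zero_of_forall_add_qRot_qI_qJ_qK_eq_zero {a b c d : ℍ[ℝ]}
    (h : ∀ p, p * a + qRot qI p * b + qRot qJ p * c + qRot qK p * d = 0) :
    a = 0 ∧ b = 0 ∧ c = 0 ∧ d = 0 := by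
  have e_one : a + b + c + d = 0 := by
    simpa only [qRot_one qI_ne_zero, qRot_one qJ_ne_zero, qRot_one qK_ne_zero, one_mul] using h 1
  have e_i : a + b - c - d = 0 := by
    have hi := h qI
    rw [qRot_self qI_ne_zero, qRot_of_anticommute qJ_ne_zero qJ_mul_qI,
      qRot_of_anticommute qK_ne_zero qK_mul_qI] at hi
    rw [← mul_eq_zero_iff_left qI_ne_zero, ← hi]
    noncomm_ring
  have e_j : a - b + c - d = 0 := by
    have hj := h qJ
    rw [qRot_of_anticommute qI_ne_zero qI_mul_qJ, qRot_self qJ_ne_zero,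
      qRot_of_anticommute qK_ne_zero qK_mul_qJ] at hj
    rw [← mul_eq_zero_iff_left qJ_ne_zero, ← hj]
    noncomm_ring
  have e_k : a - b - c + d = 0 := by
    have hk := h qK
    rw [qRot_of_anticommute qI_ne_zero qI_mul_qK, qRot_of_anticommute qJ_ne_zero qJ_mul_qK,
      qRot_self qK_ne_zero] at hk
    rw [← mul_eq_zero_iff_left qK_ne_zero, ← hk]
    noncomm_ring
  refine ⟨?_, ?_, ?_, ?_⟩ <;> rw [← smul_eq_zero_iff_right (four_ne_zero' ℝ)]
  · linear_combination (norm := module) e_one + e_i + e_j + e_k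
  · linear_combination (norm := module) e_one + e_i - e_j - e_k
  · linear_combination (norm := module) e_one - e_i + e_j - e_k
  · linear_combination (norm := module) e_one - e_i - e_j + e_k

theorem right_rotated_differentials_independent
    (μ : ℍ[ℝ]) (hμ : μ ≠ 0) (f₁ f₂ f₃ f₄ : ℍ[ℝ])
    (h : ∀ p : ℍ[ℝ], qRot μ p * f₁ + qRot (μ * qI) p * f₂
      + qRot (μ * qJ) p * f₃ + qRot (μ * qK) p * f₄ = 0) :
    f₁ = 0 ∧ f₂ = 0 ∧ f₃ = 0 ∧ f₄ = 0 := by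
  have h' : ∀ p, p * (μ⁻¹ * f₁) + qRot qI p * (μ⁻¹ * f₂) + qRot qJ p * (μ⁻¹ * f₃)
      + qRot qK p * (μ⁻¹ * f₄) = 0 := fun p => by
    rw [← mul_eq_zero_iff_left hμ, ← h p]
    simp only [qRot, mul_inv_rev, mul_add, mul_assoc]
  simpa only [mul_eq_zero, inv_eq_zero, hμ, false_or] using
    eq_zero_of_forall_add_qRot_qI_qJ_qK_eq_zero h'
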